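/- For all positive integers n, k and integers i with 0 ≤ i ≤ n, the rational function ([n]_q/[n-i]_q) · [n-i choose i]_q equals the polynomial [n-i choose i]_q + q^{n-i} · [n-i-1 choose i-1]_q. -/
import Mathlib


open Finset

/-- The variable `q`, as a rational function over `ℚ`. -/
noncomputable def q : RatFunc ℚ := RatFunc.X

/-- The q-integer `[m]_q = (1 - q^m)/(1 - q)`. -/
noncomputable def qint (m : ℕ) : RatFunc ℚ := (1 - q ^ m) / (1 - q)

/-- The q-integer for an integer exponent, `[x; q] = (q^x - 1)/(q - 1)`. -/
noncomputable def qintZ (x : ℤ) : RatFunc ℚ := (q ^ x - 1) / (q - 1)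

/-- The q-factorial `[m]!_q`. -/
noncomputable def qfac (m : ℕ) : RatFunc ℚ := ∏ i ∈ Finset.range m, qint (i + 1)

/-- The Gaussian q-binomial coefficient `[a choose b]_q`, zero when `b < 0` or `b > a`. -/
noncomputable def qbin (a b : ℤ) : RatFunc ℚ :=
  if 0 ≤ b ∧ b ≤ a then qfac a.toNat / (qfac b.toNat * qfac (a - b).toNat) else 0

/-- The first generalized q-binomial coefficient `(n choose p, k)_q`:
`([n]_q/[k]_q) · Σ_{r≥0} [p choose r]_q [n-p choose r]_q [n-r-1 choose k-r-1]_q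
  q^{(n-p)p + r(r-k)}`. -/
noncomputable def gchoose (n p k : ℕ) : RatFunc ℚ :=
  (qint n / qint k) *
    ∑ r ∈ Finset.range (n + 1),
      qbin p r * qbin ((n : ℤ) - p) r * qbin ((n : ℤ) - r - 1) ((k : ℤ) - r - 1) *
        q ^ (((n : ℤ) - p) * p + (r : ℤ) * ((r : ℤ) - k))

lemma q_pow_ne_one (m : ℕ) (hm : 0 < m) : (q : RatFunc ℚ) ^ m ≠ 1 := by
  intro h
  have h2 : (algebraMap (Polynomial ℚ) (RatFunc ℚ)) (Polynomial.X ^ m) =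
      (algebraMap (Polynomial ℚ) (RatFunc ℚ)) 1 := by
    simpa [q, RatFunc.algebraMap_X] using h
  have h3 := RatFunc.algebraMap_injective ℚ h2
  have := congrArg Polynomial.natDegree h3
  simp [Polynomial.natDegree_X_pow] at this
  omega

lemma one_sub_q_pow_ne_zero (m : ℕ) (hm : 0 < m) : (1 : RatFunc ℚ) - q ^ m ≠ 0 := by
  intro h
  exact q_pow_ne_one m hm (by linear_combination -h)

lemma qint_ne_zero (m : ℕ) (hm : 0 < m) : qint m ≠ 0 :=
  div_ne_zero (one_sub_q_pow_ne_zero m hm)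
    (by simpa using one_sub_q_pow_ne_zero 1 one_pos)

lemma qfac_ne_zero (m : ℕ) : qfac m ≠ 0 :=
  Finset.prod_ne_zero_iff.mpr fun i _ => qint_ne_zero _ (Nat.succ_pos i)

lemma qintZ_natCast (m : ℕ) : qintZ m = qint m := by
  rw [qintZ, qint, zpow_natCast, ← neg_div_neg_eq]
  ring_nf

lemma qfac_succ (m : ℕ) : qfac (m + 1) = qfac m * qint (m + 1) :=
  Finset.prod_range_succ _ m

lemma qint_add (a b : ℕ) : qint (a + b) = qint a + q ^ a * qint b := by
  have h : (1 : RatFunc ℚ) - q ≠ 0 := by simpa using one_sub_q_pow_ne_zero 1 one_pos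
  rw [qint, qint, qint]
  field_simp
  rw [pow_add]; ring

theorem qint_ratio_qbin (n k : ℕ) (i : ℤ) (hn : 0 < n) (hk : 0 < k)
    (hi0 : 0 ≤ i) (hin : i ≤ n) :
    (qintZ n / qintZ ((n : ℤ) - i)) * qbin ((n : ℤ) - i) i =
      qbin ((n : ℤ) - i) i + q ^ ((n : ℤ) - i) * qbin ((n : ℤ) - i - 1) (i - 1) := by
  obtain ⟨j, rfl⟩ : ∃ j : ℕ, i = (j : ℤ) := ⟨i.toNat, (Int.toNat_of_nonneg hi0).symm⟩
  have hjn : j ≤ n := by exact_mod_cast hin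
  have hcast : ((n : ℤ) - j) = ((n - j : ℕ) : ℤ) := by
    rw [Nat.cast_sub hjn]
  rcases Nat.eq_or_lt_of_le hjn with rfl | hjlt
  · have h1 : qbin ((j : ℤ) - j) j = 0 := by
      rw [qbin, if_neg]; push_neg; intro _; omega
    have h2 : qbin ((j : ℤ) - j - 1) ((j : ℤ) - 1) = 0 := by
      rw [qbin, if_neg]; push_neg; intro _; omega
    rw [h1, h2]; ring
  rcases Nat.eq_zero_or_pos j with rfl | hj0
  · simp only [Nat.cast_zero, sub_zero]
    have h2 : qbin ((n : ℤ) - 1) ((0 : ℤ) - 1) = 0 := by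
      rw [qbin, if_neg]; push_neg; intro h; omega
    rw [h2, div_self (by rw [qintZ_natCast]; exact qint_ne_zero n hn)]
    ring
  rcases lt_or_ge (n - j) j with hlt | hle
  · have h1 : qbin ((n : ℤ) - j) j = 0 := by
      rw [qbin, if_neg]; push_neg; intro _; omega
    have h2 : qbin ((n : ℤ) - j - 1) ((j : ℤ) - 1) = 0 := by
      rw [qbin, if_neg]; push_neg; intro _; omega
    rw [h1, h2]; ring
  · set a := n - j with ha
    set c := n - 2 * j with hc
    have ha1 : 0 < a := by omega
    have h1 : qbin ((n : ℤ) - j) j = qfac a / (qfac j * qfac c) := by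
      rw [qbin, if_pos ⟨Int.natCast_nonneg j, by omega⟩]
      have e1 : ((n : ℤ) - j).toNat = a := by omega
      have e2 : ((j : ℤ)).toNat = j := by omega
      have e3 : ((n : ℤ) - j - j).toNat = c := by omega
      rw [e1, e2, e3]
    have h2 : qbin ((n : ℤ) - j - 1) ((j : ℤ) - 1) =
        qfac (a - 1) / (qfac (j - 1) * qfac c) := by
      rw [qbin, if_pos ⟨by omega, by omega⟩]
      have e1 : ((n : ℤ) - j - 1).toNat = a - 1 := by omega
      have e2 : ((j : ℤ) - 1).toNat = j - 1 := by omega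
      have e3 : ((n : ℤ) - j - 1 - ((j : ℤ) - 1)).toNat = c := by omega
      rw [e1, e2, e3]
    rw [h1, h2, hcast, zpow_natCast, qintZ_natCast, qintZ_natCast]
    have hqn : qint n = qint a + q ^ a * qint j := by
      have := qint_add a j
      rwa [show a + j = n by omega] at this
    have hfa : qfac a = qfac (a - 1) * qint a := by
      have := qfac_succ (a - 1)
      rwa [show a - 1 + 1 = a by omega] at this
    have hfj : qfac j = qfac (j - 1) * qint j := by
      have := qfac_succ (j - 1)
      rwa [show j - 1 + 1 = j by omega] at this
    rw [hqn, hfa, hfj]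
    field_simp [qint_ne_zero a ha1, qint_ne_zero j hj0, qfac_ne_zero]
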